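/- Let (𝒩, K) be a power law kinetic system with an incidence independent decomposition 𝒩 = 𝒩₁ ∪ 𝒩₂ such that each subsystem (𝒩ᵢ, Kᵢ) is of CLP type with log-parametrization subspace S̃ᵢ, i.e., Z₊(𝒩ᵢ, Kᵢ) = {x ∈ ℝ^𝒮_{>0} : log x − log xᵢ ∈ S̃ᵢ^⊥} for some positive equilibrium xᵢ. If S̃₁ ∩ S̃₂ = {0}, then (𝒩, K) is of CLP type with Z₊(𝒩, K) = {x ∈ ℝ^𝒮_{>0} : log x − log x* ∈ (S̃₁ + S̃₂)^⊥} for some x* ∈ Z₊(𝒩, K); in particular Z₊(𝒩, K) ≠ ∅. -/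

import Mathlib

/-
Incidence independence makes a flux vector balanced exactly when each subnetwork's part of it
is, so `Z₊(𝒩, K) = Z₊(𝒩₁, K₁) ∩ Z₊(𝒩₂, K₂)`. As `S̃₁ ∩ S̃₂ = 0`, the space
`(S̃₁ ∩ S̃₂)^⊥ = S̃₁^⊥ + S̃₂^⊥` is everything, so `log x₂ - log x₁ = a + b` with `a ∈ S̃₁^⊥`,
`b ∈ S̃₂^⊥`, and `x* = x₁ · exp a` lies in both log-parametrized sets. Each such set may be
re-centred at any of its points, and the two sets centred at `x*` intersect in the one for
`S̃₁^⊥ ∩ S̃₂^⊥ = (S̃₁ + S̃₂)^⊥`.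
-/

open Finset

/-- The set of complexes of subnetwork `i` (complexes occurring in its reactions). -/
def cplxSet {C R : Type} (src tgt : R → C) {k : ℕ} (part : R → Fin k) (i : Fin k) : Set C :=
  {c | ∃ r, part r = i ∧ (src r = c ∨ tgt r = c)}

/-- The set of common complexes of the decomposition: complexes occurring in at least
two distinct subnetworks. -/
def commonSet {C R : Type} (src tgt : R → C) {k : ℕ} (part : R → Fin k) : Set C :=
  {c | ∃ i j : Fin k, i ≠ j ∧ c ∈ cplxSet src tgt part i ∧ c ∈ cplxSet src tgt part j}

/-- Underlying (undirected) graph of the reaction network. -/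
def parentGraph {C R : Type} (src tgt : R → C) : SimpleGraph C :=
  SimpleGraph.fromRel (fun a b => ∃ r, src r = a ∧ tgt r = b)

/-- Underlying graph of subnetwork `i`. -/
def subGraph {C R : Type} (src tgt : R → C) {k : ℕ} (part : R → Fin k) (i : Fin k) :
    SimpleGraph C :=
  SimpleGraph.fromRel (fun a b => ∃ r, part r = i ∧ src r = a ∧ tgt r = b)

/-- The incidence map `I_a : ℝ^ℛ → ℝ^𝒞`. -/
noncomputable def incid {C R : Type} [Fintype R] [DecidableEq C] (src tgt : R → C) :
    (R → ℝ) →ₗ[ℝ] (C → ℝ) :=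
  ∑ r : R, (LinearMap.toSpanSingleton ℝ (C → ℝ)
      (Pi.single (tgt r) 1 - Pi.single (src r) 1)).comp (LinearMap.proj r)

/-- The incidence map of subnetwork `i`. -/
noncomputable def incidSub {C R : Type} [Fintype R] [DecidableEq C] (src tgt : R → C)
    {k : ℕ} (part : R → Fin k) (i : Fin k) : (R → ℝ) →ₗ[ℝ] (C → ℝ) :=
  ∑ r ∈ Finset.univ.filter (fun r => part r = i),
    (LinearMap.toSpanSingleton ℝ (C → ℝ)
      (Pi.single (tgt r) 1 - Pi.single (src r) 1)).comp (LinearMap.proj r)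

/-- Incidence independence: the image of the incidence map of the parent network is
the (internal) direct sum of the images of the subnetworks' incidence maps. -/
def IncIndep {C R : Type} [Fintype R] [DecidableEq C] (src tgt : R → C)
    {k : ℕ} (part : R → Fin k) : Prop :=
  LinearMap.range (incid src tgt) = (⨆ i : Fin k, LinearMap.range (incidSub src tgt part i)) ∧
  ∀ f : Fin k → (C → ℝ), (∀ i, f i ∈ LinearMap.range (incidSub src tgt part i)) →
    (∑ i, f i) = 0 → ∀ i, f i = 0

/-- Number of linkage classes of subnetwork `i`: connected components of its underlying
graph that meet its complex set. -/
noncomputable def numLCsub {C R : Type} (src tgt : R → C) {k : ℕ} (part : R → Fin k)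
    (i : Fin k) : ℕ :=
  Nat.card {comp : (subGraph src tgt part i).ConnectedComponent //
    ∃ c ∈ cplxSet src tgt part i, (subGraph src tgt part i).connectedComponentMk c = comp}
/-- Set of complex balanced equilibria `Z₊(𝒩, K)` of the whole network. -/
def Zfull {S C R : Type} [Fintype R] [DecidableEq C] (src tgt : R → C)
    (K : R → (S → ℝ) → ℝ) : Set (S → ℝ) :=
  {x | (∀ s, 0 < x s) ∧
    ∑ r : R, K r x • ((Pi.single (tgt r) 1 - Pi.single (src r) 1 : C → ℝ)) = 0}

/-- Set of complex balanced equilibria `Z₊(𝒩ᵢ, Kᵢ)` of subnetwork `i`. -/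
def Zsub {S C R : Type} [Fintype R] [DecidableEq C] (src tgt : R → C)
    (K : R → (S → ℝ) → ℝ) {k : ℕ} (part : R → Fin k) (i : Fin k) : Set (S → ℝ) :=
  {x | (∀ s, 0 < x s) ∧
    ∑ r ∈ Finset.univ.filter (fun r => part r = i),
      K r x • ((Pi.single (tgt r) 1 - Pi.single (src r) 1 : C → ℝ)) = 0}

/-- The "orthogonal complement" of a subspace of `ℝ^𝒮` w.r.t. the standard scalar
product. -/
def perp {S : Type} [Fintype S] (U : Submodule ℝ (S → ℝ)) : Set (S → ℝ) :=
  {v | ∀ u ∈ U, ∑ s, v s * u s = 0}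

section Incidence

variable {C R : Type} [Fintype R] [DecidableEq C] (src tgt : R → C)

lemma incid_apply (a : R → ℝ) :
    incid src tgt a = ∑ r, a r • (Pi.single (tgt r) 1 - Pi.single (src r) 1 : C → ℝ) := by
  simp [incid, LinearMap.sum_apply]

lemma incidSub_apply {k : ℕ} (part : R → Fin k) (i : Fin k) (a : R → ℝ) :
    incidSub src tgt part i a = ∑ r ∈ univ.filter (fun r => part r = i),
      a r • (Pi.single (tgt r) 1 - Pi.single (src r) 1 : C → ℝ) := by
  simp [incidSub, LinearMap.sum_apply]

lemma sum_incidSub {k : ℕ} (part : R → Fin k) :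
    ∑ i, incidSub src tgt part i = incid src tgt := by
  ext1 a
  rw [LinearMap.sum_apply, incid_apply]
  simp_rw [incidSub_apply]
  exact sum_fiberwise univ part _

variable {src tgt}

lemma IncIndep.incid_eq_zero_iff {k : ℕ} {part : R → Fin k} (hind : IncIndep src tgt part)
    (a : R → ℝ) : incid src tgt a = 0 ↔ ∀ i, incidSub src tgt part i a = 0 := by
  rw [← sum_incidSub src tgt part, LinearMap.sum_apply]
  exact ⟨hind.2 _ (fun i => LinearMap.mem_range_self _ a), fun h => sum_eq_zero fun i _ => h i⟩

lemma IncIndep.Zfull_eq_inter {S : Type} {part : R → Fin 2} (hind : IncIndep src tgt part)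
    (K : R → (S → ℝ) → ℝ) :
    Zfull src tgt K = Zsub src tgt K part 0 ∩ Zsub src tgt K part 1 := by
  ext x
  have h := hind.incid_eq_zero_iff (fun r => K r x)
  simp only [incid_apply, incidSub_apply, Fin.forall_fin_two] at h
  simp only [Zfull, Zsub, Set.mem_inter_iff, Set.mem_ofPred_eq, h]
  tauto

end Incidence

theorem Submodule.orthogonal_inf {𝕜 E : Type*} [RCLike 𝕜] [NormedAddCommGroup E]
    [InnerProductSpace 𝕜 E] [FiniteDimensional 𝕜 E] (A B : Submodule 𝕜 E) :
    (A ⊓ B)ᗮ = Aᗮ ⊔ Bᗮ :=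
  calc (A ⊓ B)ᗮ = (Aᗮᗮ ⊓ Bᗮᗮ)ᗮ := by simp only [Submodule.orthogonal_orthogonal]
    _ = (Aᗮ ⊔ Bᗮ)ᗮᗮ := by rw [Submodule.inf_orthogonal]
    _ = Aᗮ ⊔ Bᗮ := Submodule.orthogonal_orthogonal _

section Perp

variable {S : Type} [Fintype S]

noncomputable def perpSpace (U : Submodule ℝ (S → ℝ)) : Submodule ℝ (S → ℝ) :=
  (U.map (WithLp.linearEquiv 2 ℝ (S → ℝ)).symm.toLinearMap)ᗮ.map
    (WithLp.linearEquiv 2 ℝ (S → ℝ)).toLinearMap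

lemma mem_perpSpace {U : Submodule ℝ (S → ℝ)} {v : S → ℝ} : v ∈ perpSpace U ↔ v ∈ perp U := by
  rw [perpSpace, Submodule.mem_map_equiv, Submodule.mem_orthogonal]
  simp only [Submodule.mem_map, forall_exists_index, and_imp, forall_apply_eq_imp_iff₂]
  -- the inner product of `toLp u` and `toLp v` unfolds to `∑ s, v s * u s`
  exact Iff.rfl

lemma perpSpace_sup (U V : Submodule ℝ (S → ℝ)) :
    perpSpace (U ⊔ V) = perpSpace U ⊓ perpSpace V := by
  simp only [perpSpace, Submodule.map_sup, ← Submodule.inf_orthogonal,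
    Submodule.map_inf _ (LinearEquiv.injective _)]

lemma perpSpace_inf (U V : Submodule ℝ (S → ℝ)) :
    perpSpace (U ⊓ V) = perpSpace U ⊔ perpSpace V := by
  simp only [perpSpace, Submodule.map_sup, Submodule.orthogonal_inf,
    Submodule.map_inf _ (LinearEquiv.injective _)]

lemma perpSpace_bot : perpSpace (⊥ : Submodule ℝ (S → ℝ)) = ⊤ := by
  simp [perpSpace]

lemma exists_add_mem_perp_of_inf_eq_bot {U V : Submodule ℝ (S → ℝ)} (h : U ⊓ V = ⊥)
    (d : S → ℝ) : ∃ a ∈ perp U, ∃ b ∈ perp V, a + b = d := by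
  have hd : d ∈ perpSpace U ⊔ perpSpace V := by
    rw [← perpSpace_inf, h, perpSpace_bot]
    exact Submodule.mem_top
  obtain ⟨a, ha, b, hb, hab⟩ := Submodule.mem_sup.mp hd
  exact ⟨a, mem_perpSpace.mp ha, b, mem_perpSpace.mp hb, hab⟩

def logParamSet (U : Submodule ℝ (S → ℝ)) (x₀ : S → ℝ) : Set (S → ℝ) :=
  {x | (∀ s, 0 < x s) ∧ (fun s => Real.log (x s) - Real.log (x₀ s)) ∈ perp U}

lemma logParamSet_eq_of_mem {U : Submodule ℝ (S → ℝ)} {x₀ x₁ : S → ℝ}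
    (h : x₁ ∈ logParamSet U x₀) : logParamSet U x₁ = logParamSet U x₀ := by
  ext x
  refine and_congr_right fun _ => ?_
  have hsplit : (fun s => Real.log (x s) - Real.log (x₀ s)) =
      (fun s => Real.log (x s) - Real.log (x₁ s)) +
        fun s => Real.log (x₁ s) - Real.log (x₀ s) := by
    ext s
    simp
  rw [← mem_perpSpace, ← mem_perpSpace, hsplit,
    Submodule.add_mem_iff_left _ (mem_perpSpace.mpr h.2)]

lemma mem_logParamSet_self (U : Submodule ℝ (S → ℝ)) {x : S → ℝ} (hx : ∀ s, 0 < x s) :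
    x ∈ logParamSet U x :=
  ⟨hx, by simp only [sub_self]; exact mem_perpSpace.mp (zero_mem _)⟩

lemma logParamSet_inter_logParamSet (U V : Submodule ℝ (S → ℝ)) (x₀ : S → ℝ) :
    logParamSet U x₀ ∩ logParamSet V x₀ = logParamSet (U ⊔ V) x₀ := by
  ext x
  simp only [logParamSet, Set.mem_inter_iff, Set.mem_ofPred_eq, ← mem_perpSpace, perpSpace_sup,
    Submodule.mem_inf]
  tauto

lemma exists_mem_logParamSet_inter {U V : Submodule ℝ (S → ℝ)} (h : U ⊓ V = ⊥)
    (x₀ x₁ : S → ℝ) : ∃ x, x ∈ logParamSet U x₀ ∧ x ∈ logParamSet V x₁ := by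
  obtain ⟨a, ha, b, hb, hab⟩ :=
    exists_add_mem_perp_of_inf_eq_bot h (fun s => Real.log (x₁ s) - Real.log (x₀ s))
  refine ⟨fun s => Real.exp (Real.log (x₀ s) + a s), ⟨fun s => Real.exp_pos _, ?_⟩,
    ⟨fun s => Real.exp_pos _, ?_⟩⟩
  · simpa only [Real.log_exp, add_sub_cancel_left]
  · have hb' := neg_mem (mem_perpSpace.mpr hb)
    rw [mem_perpSpace] at hb'
    convert hb' using 1
    ext s
    have hs := congrFun hab s
    simp only [Pi.add_apply] at hs
    simp only [Real.log_exp, Pi.neg_apply]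
    linarith

end Perp

theorem stmt18_general {S C R : Type} [Fintype S] [Fintype R] [DecidableEq C]
    (src tgt : R → C)
    (part : R → Fin 2)
    (K : R → (S → ℝ) → ℝ)
    -- the decomposition is incidence independent:
    (hind : IncIndep src tgt part)
    -- each subsystem is of CLP type with subspace `S̃ᵢ`:
    (St : Fin 2 → Submodule ℝ (S → ℝ)) (x₀ : Fin 2 → (S → ℝ))
    (hCLP : ∀ i, Zsub src tgt K part i =
      {x | (∀ s, 0 < x s) ∧
        (fun s => Real.log (x s) - Real.log (x₀ i s)) ∈ perp (St i)})
    (hS : St 0 ⊓ St 1 = ⊥) :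
    ∃ xstar ∈ Zfull src tgt K,
      Zfull src tgt K =
        {x | (∀ s, 0 < x s) ∧
          (fun s => Real.log (x s) - Real.log (xstar s)) ∈ perp (St 0 ⊔ St 1)} := by
  have hCLP' : ∀ i, Zsub src tgt K part i = logParamSet (St i) (x₀ i) := hCLP
  obtain ⟨xstar, h₀, h₁⟩ := exists_mem_logParamSet_inter hS (x₀ 0) (x₀ 1)
  have hZ : Zfull src tgt K = logParamSet (St 0 ⊔ St 1) xstar := by
    rw [hind.Zfull_eq_inter, hCLP', hCLP', ← logParamSet_eq_of_mem h₀,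
      ← logParamSet_eq_of_mem h₁, logParamSet_inter_logParamSet]
  exact ⟨xstar, hZ ▸ mem_logParamSet_self _ h₀.1, hZ⟩

/-- let `(𝒩, K)` be a power law kinetic system with an incidence
independent decomposition `𝒩 = 𝒩₁ ∪ 𝒩₂` whose subsystems are of CLP type with
log-parametrization subspaces `S̃ᵢ`. If `S̃₁ ∩ S̃₂ = {0}`, then `(𝒩, K)` is of CLP type
with `Z₊(𝒩, K) = {x > 0 : log x − log x* ∈ (S̃₁ + S̃₂)^⊥}` for some complex balanced
equilibrium `x*`; in particular `Z₊(𝒩, K) ≠ ∅`. -/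
theorem stmt18 {S C R : Type} [Fintype S] [Fintype C] [Fintype R] [DecidableEq C]
    (src tgt : R → C)
    (hloop : ∀ r, src r ≠ tgt r)
    (part : R → Fin 2)
    (K : R → (S → ℝ) → ℝ)
    -- (𝒩, K) is a power law kinetic system:
    (kco : R → ℝ) (hk : ∀ r, 0 < kco r) (F : R → S → ℝ)
    (hK : ∀ r x, (∀ s, 0 < x s) → K r x = kco r * ∏ s, x s ^ F r s)
    -- the decomposition is incidence independent:
    (hind : IncIndep src tgt part)
    -- each subsystem is of CLP type with subspace `S̃ᵢ`:
    (St : Fin 2 → Submodule ℝ (S → ℝ)) (x₀ : Fin 2 → (S → ℝ))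
    (hx₀ : ∀ i, x₀ i ∈ Zsub src tgt K part i)
    (hCLP : ∀ i, Zsub src tgt K part i =
      {x | (∀ s, 0 < x s) ∧
        (fun s => Real.log (x s) - Real.log (x₀ i s)) ∈ perp (St i)})
    (hS : St 0 ⊓ St 1 = ⊥) :
    ∃ xstar ∈ Zfull src tgt K,
      Zfull src tgt K =
        {x | (∀ s, 0 < x s) ∧
          (fun s => Real.log (x s) - Real.log (xstar s)) ∈ perp (St 0 ⊔ St 1)} :=
  stmt18_general src tgt part K hind St x₀ hCLP hS
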